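/- arXiv:2404.15054 — 3 statements merged into one kernel-verified Lean document; each statement's English description precedes it below -/
import Mathlib

section
/- Let m, n ≥ 2, 0 < ε ≤ 1/100 and 0 < k < 1/100, and set R₁ = 100. Suppose φ, ψ, ρ : [R₁/10, 10R₁] → (0,∞) are smooth and satisfy: 0 < ρ'' < δ₁/R₁, 0 ≤ ρ' ≤ δ₁, δ ≤ ρ ≤ δ + 9δ₁R₁; 0 < ψ'' < δ₁/R₁, 0 ≤ ψ' ≤ δ₁, δ ≤ ψ ≤ δ + 9δ₁R₁; -φ'' > (1-ε-k)/(100R₁), k ≤ φ' ≤ 1-ε, and (1-ε)R₁/20 ≤ φ ≤ (1-ε+9k)R₁. Then there exists δ₁₀ > 0 depending only on m, n, δ such that if 0 < δ₁ ≤ δ₁₀, the four Ricci curvature expressions Ric₀₀ = -(mφ''/φ + nψ''/ψ + 2ρ''/ρ), Ric₁₁ = -φ''/φ + (m-1)(1-φ'²)/φ² - nφ'ψ'/(φψ) - 2φ'ρ'/(φρ), Ric₂₂ = -ψ''/ψ + (n-1)(1-ψ'²)/ψ² - mφ'ψ'/(φψ) - 2ψ'ρ'/(ψρ), and Ric₃₃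 = -ρ''/ρ + (1-ρ'²)/ρ² - mφ'ρ'/(φρ) - nψ'ρ'/(ψρ) are all nonnegative on [R₁/10, 10R₁]. -/
noncomputable section
open Set

/-- Radial Ricci curvature of the triple warped product
`dr² + φ(r)²g_{S^m} + ψ(r)²g_{S^n} + ρ(r)²g_{S^2}`. -/
def Ric00 (m n : ℕ) (φ ψ ρ : ℝ → ℝ) (r : ℝ) : ℝ :=
  -((m : ℝ) * deriv (deriv φ) r / φ r + (n : ℝ) * deriv (deriv ψ) r / ψ r +
    2 * deriv (deriv ρ) r / ρ r)

/-- Ricci curvature in the `S^m` direction. -/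
def Ric11 (m n : ℕ) (φ ψ ρ : ℝ → ℝ) (r : ℝ) : ℝ :=
  -(deriv (deriv φ) r) / φ r + ((m : ℝ) - 1) * (1 - (deriv φ r) ^ 2) / (φ r) ^ 2 -
    (n : ℝ) * (deriv φ r * deriv ψ r) / (φ r * ψ r) -
    2 * (deriv φ r * deriv ρ r) / (φ r * ρ r)

/-- Ricci curvature in the `S^n` direction. -/
def Ric22 (m n : ℕ) (φ ψ ρ : ℝ → ℝ) (r : ℝ) : ℝ :=
  -(deriv (deriv ψ) r) / ψ r + ((n : ℝ) - 1) * (1 - (deriv ψ r) ^ 2) / (ψ r) ^ 2 -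
    (m : ℝ) * (deriv φ r * deriv ψ r) / (φ r * ψ r) -
    2 * (deriv ψ r * deriv ρ r) / (ψ r * ρ r)

/-- Ricci curvature in the `S^2` direction. -/
def Ric33 (m n : ℕ) (φ ψ ρ : ℝ → ℝ) (r : ℝ) : ℝ :=
  -(deriv (deriv ρ) r) / ρ r + (1 - (deriv ρ r) ^ 2) / (ρ r) ^ 2 -
    (m : ℝ) * (deriv φ r * deriv ρ r) / (φ r * ρ r) -
    (n : ℝ) * (deriv ψ r * deriv ρ r) / (ψ r * ρ r)


set_option maxHeartbeats 1000000 in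
private lemma aux00 (M N a a2 b b2 c c2 d d1 : ℝ)
    (hM : 2 ≤ M) (hN : 2 ≤ N) (hd : 0 < d) (hd1 : 0 < d1)
    (hA : d1 * (M + N + 2) ≤ d * (1 / 1250000))
    (ha : 99 / 20 ≤ a) (hau : a ≤ 109) (ha2 : a2 ≤ -(49 / 500000))
    (hb : d ≤ b) (hbu : b ≤ 2 * d) (hb2 : 0 ≤ b2) (hb2u : b2 ≤ d1 / 100)
    (hc : d ≤ c) (hcu : c ≤ 2 * d) (hc2 : 0 ≤ c2) (hc2u : c2 ≤ d1 / 100) :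
    0 ≤ -(M * a2 / a + N * b2 / b + 2 * c2 / c) := by
  have hap : (0:ℝ) < a := by linarith
  have hbp : (0:ℝ) < b := by linarith
  have hcp : (0:ℝ) < c := by linarith
  have key : -(M * a2 / a + N * b2 / b + 2 * c2 / c)
      = (-(M * a2 * (b * c) + N * b2 * (a * c) + 2 * c2 * (a * b))) / (a * (b * c)) := by
    field_simp
  rw [key]
  apply div_nonneg _ (by positivity)
  have hbc : d * d ≤ b * c := mul_le_mul hb hc hd.le (by linarith)
  have t1 : (49 / 500000) * (d * d) ≤ (-a2) * (b * c) :=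
    mul_le_mul (by linarith) hbc (by positivity) (by linarith)
  have t2 : 2 * ((49 / 500000) * (d * d)) ≤ M * ((-a2) * (b * c)) :=
    mul_le_mul hM t1 (by positivity) (by linarith)
  have t3 : N * b2 * (a * c) ≤ N * (d1 / 100) * (109 * (2 * d)) := by
    apply mul_le_mul (mul_le_mul le_rfl hb2u hb2 (by linarith))
      (mul_le_mul hau hcu (by linarith) (by norm_num))
      (by positivity) (by positivity)
  have t4 : 2 * c2 * (a * b) ≤ 2 * (d1 / 100) * (109 * (2 * d)) := by
    apply mul_le_mul (by linarith)
      (mul_le_mul hau hbu (by linarith) (by norm_num))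
      (by positivity) (by positivity)
  have h5 : d1 * (M + N + 2) * ((218 / 100) * d) ≤ d * (1 / 1250000) * ((218 / 100) * d) :=
    mul_le_mul_of_nonneg_right hA (by positivity)
  have h6 : (0:ℝ) ≤ M * d1 * d := by
    have : (0:ℝ) ≤ M := by linarith
    positivity
  nlinarith [t2, t3, t4, h5, h6, mul_pos hd hd]

set_option maxHeartbeats 1000000 in
private lemma aux11 (M N a a1 a2 b b1 c c1 d d1 : ℝ)
    (hM : 2 ≤ M) (hN : 2 ≤ N) (hd : 0 < d) (hd1 : 0 < d1)
    (hA : d1 * (M + N + 2) ≤ d * (1 / 1250000))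
    (ha : 99 / 20 ≤ a) (hau : a ≤ 109) (ha2 : a2 ≤ -(49 / 500000))
    (ha1 : 0 ≤ a1) (ha1u : a1 ≤ 1)
    (hb : d ≤ b) (hbu : b ≤ 2 * d) (hb1 : 0 ≤ b1) (hb1u : b1 ≤ d1)
    (hc : d ≤ c) (hcu : c ≤ 2 * d) (hc1 : 0 ≤ c1) (hc1u : c1 ≤ d1) :
    0 ≤ -a2 / a + (M - 1) * (1 - a1 ^ 2) / a ^ 2 - N * (a1 * b1) / (a * b) -
      2 * (a1 * c1) / (a * c) := by
  have hap : (0:ℝ) < a := by linarith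
  have hbp : (0:ℝ) < b := by linarith
  have hcp : (0:ℝ) < c := by linarith
  have key : -a2 / a + (M - 1) * (1 - a1 ^ 2) / a ^ 2 - N * (a1 * b1) / (a * b) -
      2 * (a1 * c1) / (a * c)
      = ((-a2) * (a * (b * c)) + (M - 1) * (1 - a1 ^ 2) * (b * c)
          - N * (a1 * b1) * (a * c) - 2 * (a1 * c1) * (a * b)) / (a ^ 2 * (b * c)) := by
    field_simp
  rw [key]
  apply div_nonneg _ (by positivity)
  have hbc : d * d ≤ b * c := mul_le_mul hb hc hd.le (by linarith)
  have t1 : (49 / 500000) * (99 / 20) * (d * d) ≤ (-a2) * (a * (b * c)) := by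
    have h1 : (49 / 500000) * (99 / 20) ≤ (-a2) * a :=
      mul_le_mul (by linarith) ha (by norm_num) (by linarith)
    calc (49 / 500000) * (99 / 20) * (d * d) ≤ ((-a2) * a) * (b * c) :=
          mul_le_mul h1 hbc (by positivity) (by nlinarith)
      _ = (-a2) * (a * (b * c)) := by ring
  have t2 : (0:ℝ) ≤ (M - 1) * (1 - a1 ^ 2) * (b * c) := by
    have : a1 ^ 2 ≤ 1 := by nlinarith
    have h1 : (0:ℝ) ≤ M - 1 := by linarith
    have h2 : (0:ℝ) ≤ 1 - a1 ^ 2 := by linarith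
    positivity
  have t3 : N * (a1 * b1) * (a * c) ≤ N * (1 * d1) * (109 * (2 * d)) :=
    mul_le_mul (mul_le_mul le_rfl (mul_le_mul ha1u hb1u hb1 (by norm_num))
        (by positivity) (by linarith))
      (mul_le_mul hau hcu (by linarith) (by norm_num)) (by positivity) (by positivity)
  have t4 : 2 * (a1 * c1) * (a * b) ≤ 2 * (1 * d1) * (109 * (2 * d)) :=
    mul_le_mul (mul_le_mul le_rfl (mul_le_mul ha1u hc1u hc1 (by norm_num))
        (by positivity) (by norm_num))
      (mul_le_mul hau hbu (by linarith) (by norm_num)) (by positivity) (by positivity)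
  have h5 : d1 * (M + N + 2) * (218 * d) ≤ d * (1 / 1250000) * (218 * d) :=
    mul_le_mul_of_nonneg_right hA (by positivity)
  have h6 : (0:ℝ) ≤ M * d1 * d := by
    have : (0:ℝ) ≤ M := by linarith
    positivity
  nlinarith [t1, t2, t3, t4, h5, h6, mul_pos hd hd]

set_option maxHeartbeats 1000000 in
private lemma aux22 (M N a a1 b b1 b2 c c1 d d1 : ℝ)
    (hM : 2 ≤ M) (hN : 2 ≤ N) (hd : 0 < d) (hd1 : 0 < d1)
    (hC : d1 ≤ 1 / 2)
    (hD : d1 * (100 * (M + N + 2) * (d + 1)) ≤ 1)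
    (ha : 99 / 20 ≤ a) (hau : a ≤ 109)
    (ha1 : 0 ≤ a1) (ha1u : a1 ≤ 1)
    (hb : d ≤ b) (hbu : b ≤ 2 * d) (hb1 : 0 ≤ b1) (hb1u : b1 ≤ d1)
    (hb2 : 0 ≤ b2) (hb2u : b2 ≤ d1 / 100)
    (hc : d ≤ c) (hcu : c ≤ 2 * d) (hc1 : 0 ≤ c1) (hc1u : c1 ≤ d1) :
    0 ≤ -b2 / b + (N - 1) * (1 - b1 ^ 2) / b ^ 2 - M * (a1 * b1) / (a * b) -
      2 * (b1 * c1) / (b * c) := by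
  have hap : (0:ℝ) < a := by linarith
  have hbp : (0:ℝ) < b := by linarith
  have hcp : (0:ℝ) < c := by linarith
  have key : -b2 / b + (N - 1) * (1 - b1 ^ 2) / b ^ 2 - M * (a1 * b1) / (a * b) -
      2 * (b1 * c1) / (b * c)
      = ((-b2) * (b * (a * c)) + (N - 1) * (1 - b1 ^ 2) * (a * c)
          - M * (a1 * b1) * (b * c) - 2 * (b1 * c1) * (a * b)) / (b ^ 2 * (a * c)) := by
    field_simp
  rw [key]
  apply div_nonneg _ (by positivity)
  have hb1sq : b1 ^ 2 ≤ 1 / 4 := by nlinarith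
  have t2 : (3 / 4) * ((99 / 20) * d) ≤ (N - 1) * (1 - b1 ^ 2) * (a * c) := by
    have h1 : (3 / 4 : ℝ) ≤ (N - 1) * (1 - b1 ^ 2) := by nlinarith
    have h2 : (99 / 20) * d ≤ a * c := mul_le_mul ha hc hd.le (by linarith)
    exact mul_le_mul h1 h2 (by positivity) (by nlinarith)
  have t1 : (-b2) * (b * (a * c)) ≥ -(d1 / 100 * ((2 * d) * (109 * (2 * d)))) := by
    have : b2 * (b * (a * c)) ≤ d1 / 100 * ((2 * d) * (109 * (2 * d))) := by
      apply mul_le_mul hb2u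
        (mul_le_mul hbu (mul_le_mul hau hcu (by linarith) (by norm_num))
          (by positivity) (by linarith)) (by positivity) (by positivity)
    linarith
  have t3 : M * (a1 * b1) * (b * c) ≤ M * (1 * d1) * ((2 * d) * (2 * d)) :=
    mul_le_mul (mul_le_mul le_rfl (mul_le_mul ha1u hb1u hb1 (by norm_num))
        (by positivity) (by linarith))
      (mul_le_mul hbu hcu (by linarith) (by linarith)) (by positivity)
      (by nlinarith)
  have t4 : 2 * (b1 * c1) * (a * b) ≤ 2 * (d1 * d1) * (109 * (2 * d)) :=
    mul_le_mul (mul_le_mul le_rfl (mul_le_mul hb1u hc1u hc1 (by linarith))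
        (by positivity) (by norm_num))
      (mul_le_mul hau hbu (by linarith) (by norm_num)) (by positivity) (by positivity)
  have hMd : 2 * d ≤ M * d := by nlinarith
  have hNd : 2 * d ≤ N * d := by nlinarith
  have hMd1 : (0:ℝ) ≤ M * d1 := by nlinarith
  have hNd1 : (0:ℝ) ≤ N * d1 := by nlinarith
  have hNd1d : (0:ℝ) ≤ N * d1 * d := by nlinarith
  have key2 : d1 * ((4 * M + 5) * d + 218) ≤ 1 := by
    have e1 : (4 * M + 5) * d + 218 ≤ 100 * (M + N + 2) * (d + 1) := by nlinarith
    nlinarith [mul_le_mul_of_nonneg_left e1 hd1.le]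
  have key3 : d1 * ((4 * M + 5) * d + 218) * d ≤ d := by
    nlinarith [mul_le_mul_of_nonneg_right key2 hd.le]
  nlinarith [t1, t2, t3, t4, key3, mul_pos hd hd, mul_nonneg hd1.le hd.le,
    mul_nonneg (mul_nonneg hd1.le hd1.le) hd.le]

set_option maxHeartbeats 1000000 in
private lemma aux33 (M N a a1 b b1 c c1 c2 d d1 : ℝ)
    (hM : 2 ≤ M) (hN : 2 ≤ N) (hd : 0 < d) (hd1 : 0 < d1)
    (hC : d1 ≤ 1 / 2)
    (hD : d1 * (100 * (M + N + 2) * (d + 1)) ≤ 1)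
    (ha : 99 / 20 ≤ a) (hau : a ≤ 109)
    (ha1 : 0 ≤ a1) (ha1u : a1 ≤ 1)
    (hb : d ≤ b) (hbu : b ≤ 2 * d) (hb1 : 0 ≤ b1) (hb1u : b1 ≤ d1)
    (hc : d ≤ c) (hcu : c ≤ 2 * d) (hc1 : 0 ≤ c1) (hc1u : c1 ≤ d1)
    (hc2 : 0 ≤ c2) (hc2u : c2 ≤ d1 / 100) :
    0 ≤ -c2 / c + (1 - c1 ^ 2) / c ^ 2 - M * (a1 * c1) / (a * c) -
      N * (b1 * c1) / (b * c) := by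
  have hap : (0:ℝ) < a := by linarith
  have hbp : (0:ℝ) < b := by linarith
  have hcp : (0:ℝ) < c := by linarith
  have key : -c2 / c + (1 - c1 ^ 2) / c ^ 2 - M * (a1 * c1) / (a * c) -
      N * (b1 * c1) / (b * c)
      = ((-c2) * (c * (a * b)) + (1 - c1 ^ 2) * (a * b)
          - M * (a1 * c1) * (c * b) - N * (b1 * c1) * (c * a)) / (c ^ 2 * (a * b)) := by
    field_simp
  rw [key]
  apply div_nonneg _ (by positivity)
  have hc1sq : c1 ^ 2 ≤ 1 / 4 := by nlinarith
  have t2 : (3 / 4) * ((99 / 20) * d) ≤ (1 - c1 ^ 2) * (a * b) := by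
    have h2 : (99 / 20) * d ≤ a * b := mul_le_mul ha hb hd.le (by linarith)
    exact mul_le_mul (by linarith) h2 (by positivity) (by linarith)
  have t1 : (-c2) * (c * (a * b)) ≥ -(d1 / 100 * ((2 * d) * (109 * (2 * d)))) := by
    have : c2 * (c * (a * b)) ≤ d1 / 100 * ((2 * d) * (109 * (2 * d))) := by
      apply mul_le_mul hc2u
        (mul_le_mul hcu (mul_le_mul hau hbu (by linarith) (by norm_num))
          (by positivity) (by linarith)) (by positivity) (by positivity)
    linarith
  have t3 : M * (a1 * c1) * (c * b) ≤ M * (1 * d1) * ((2 * d) * (2 * d)) :=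
    mul_le_mul (mul_le_mul le_rfl (mul_le_mul ha1u hc1u hc1 (by norm_num))
        (by positivity) (by linarith))
      (mul_le_mul hcu hbu (by linarith) (by linarith)) (by positivity)
      (by nlinarith)
  have t4 : N * (b1 * c1) * (c * a) ≤ N * (d1 * d1) * ((2 * d) * 109) :=
    mul_le_mul (mul_le_mul le_rfl (mul_le_mul hb1u hc1u hc1 (by linarith))
        (by positivity) (by nlinarith))
      (mul_le_mul hcu hau (by linarith) (by linarith)) (by positivity)
      (by nlinarith)
  have key2 : d1 * ((4 * M + 5) * d + 109 * N) ≤ 3 := by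
    have e1 : (4 * M + 5) * d + 109 * N ≤ 300 * (M + N + 2) * (d + 1) := by
      nlinarith [mul_nonneg (by linarith : (0:ℝ) ≤ M) hd.le,
        mul_nonneg (by linarith : (0:ℝ) ≤ N) hd.le]
    nlinarith [mul_le_mul_of_nonneg_left e1 hd1.le]
  have key3 : d1 * ((4 * M + 5) * d + 109 * N) * d ≤ 3 * d := by
    nlinarith [mul_le_mul_of_nonneg_right key2 hd.le]
  have hNd1 : (0:ℝ) ≤ N * d1 := by nlinarith
  nlinarith [t1, t2, t3, t4, key3, mul_pos hd hd, mul_nonneg hd1.le hd.le,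
    mul_nonneg (mul_nonneg hNd1 hd1.le) hd.le]

set_option maxHeartbeats 1000000 in
/-- on `[R₁/10, 10R₁]` with `R₁ = 100`, if the warping functions satisfy the
listed bounds, then for `δ₁` small enough (depending only on m, n, δ) all four Ricci
curvature expressions are nonnegative. -/
theorem stmt3 (m n : ℕ) (hm : 2 ≤ m) (hn : 2 ≤ n) (ε k δ : ℝ)
    (hε : 0 < ε ∧ ε ≤ 1 / 100) (hk : 0 < k ∧ k < 1 / 100) (hδ : 0 < δ) :
    ∃ δ₁₀ > (0:ℝ), ∀ δ₁ : ℝ, 0 < δ₁ → δ₁ ≤ δ₁₀ →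
      ∀ φ ψ ρ : ℝ → ℝ,
        ContDiffOn ℝ (⊤ : ℕ∞) φ (Icc 10 1000) → ContDiffOn ℝ (⊤ : ℕ∞) ψ (Icc 10 1000) →
        ContDiffOn ℝ (⊤ : ℕ∞) ρ (Icc 10 1000) →
        (∀ r ∈ Icc (10:ℝ) 1000,
          (0 < deriv (deriv ρ) r ∧ deriv (deriv ρ) r < δ₁ / 100) ∧
          (0 ≤ deriv ρ r ∧ deriv ρ r ≤ δ₁) ∧
          (δ ≤ ρ r ∧ ρ r ≤ δ + 9 * δ₁ * 100) ∧
          (0 < deriv (deriv ψ) r ∧ deriv (deriv ψ) r < δ₁ / 100) ∧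
          (0 ≤ deriv ψ r ∧ deriv ψ r ≤ δ₁) ∧
          (δ ≤ ψ r ∧ ψ r ≤ δ + 9 * δ₁ * 100) ∧
          (deriv (deriv φ) r < -((1 - ε - k) / (100 * 100))) ∧
          (k ≤ deriv φ r ∧ deriv φ r ≤ 1 - ε) ∧
          ((1 - ε) * 100 / 20 ≤ φ r ∧ φ r ≤ (1 - ε + 9 * k) * 100)) →
        ∀ r ∈ Icc (10:ℝ) 1000,
          0 ≤ Ric00 m n φ ψ ρ r ∧ 0 ≤ Ric11 m n φ ψ ρ r ∧
          0 ≤ Ric22 m n φ ψ ρ r ∧ 0 ≤ Ric33 m n φ ψ ρ r := by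
  have hmn : (0:ℝ) < (m:ℝ) + (n:ℝ) + 2 := by positivity
  have hm2 : (2:ℝ) ≤ (m:ℝ) := by exact_mod_cast hm
  have hn2 : (2:ℝ) ≤ (n:ℝ) := by exact_mod_cast hn
  refine ⟨min (δ * (1 / 1250000) / ((m:ℝ) + (n:ℝ) + 2))
    (min (δ / 900) (min (1 / 2) (1 / (100 * ((m:ℝ) + (n:ℝ) + 2) * (δ + 1))))), ?_, ?_⟩
  · have h1 : (0:ℝ) < δ * (1 / 1250000) / ((m:ℝ) + (n:ℝ) + 2) := by positivity
    have h2 : (0:ℝ) < δ / 900 := by positivity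
    have h3 : (0:ℝ) < 1 / (100 * ((m:ℝ) + (n:ℝ) + 2) * (δ + 1)) := by positivity
    simp only [lt_min_iff]
    exact ⟨h1, h2, by norm_num, h3⟩
  intro δ₁ hδ₁ hδ₁₀ φ ψ ρ _ _ _ hbd r hr
  obtain ⟨⟨hc2p, hc2u⟩, ⟨hc1l, hc1u⟩, ⟨hcl, hcu⟩, ⟨hb2p, hb2u⟩, ⟨hb1l, hb1u⟩, ⟨hbl, hbu⟩,
    ha2, ⟨ha1l, ha1u⟩, hal, hau⟩ := hbd r hr
  obtain ⟨hε1, hε2⟩ := hε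
  obtain ⟨hk1, hk2⟩ := hk
  have hA : δ₁ * ((m:ℝ) + (n:ℝ) + 2) ≤ δ * (1 / 1250000) := by
    have h := le_trans hδ₁₀ (min_le_left _ _)
    rw [le_div_iff₀ hmn] at h
    linarith
  have hB : 900 * δ₁ ≤ δ := by
    have h := le_trans hδ₁₀ (le_trans (min_le_right _ _) (min_le_left _ _))
    linarith
  have hC : δ₁ ≤ 1 / 2 :=
    le_trans hδ₁₀ (le_trans (min_le_right _ _) (le_trans (min_le_right _ _) (min_le_left _ _)))
  have hD : δ₁ * (100 * ((m:ℝ) + (n:ℝ) + 2) * (δ + 1)) ≤ 1 := by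
    have h := le_trans hδ₁₀
      (le_trans (min_le_right _ _) (le_trans (min_le_right _ _) (min_le_right _ _)))
    rw [le_div_iff₀ (by positivity)] at h
    linarith
  have halb : (99 / 20 : ℝ) ≤ φ r := by linarith
  have haub : φ r ≤ 109 := by linarith
  have ha2' : deriv (deriv φ) r ≤ -(49 / 500000) := by linarith
  have ha1l' : (0:ℝ) ≤ deriv φ r := by linarith
  have ha1u' : deriv φ r ≤ 1 := by linarith
  have hbub : ψ r ≤ 2 * δ := by linarith
  have hcub : ρ r ≤ 2 * δ := by linarith
  refine ⟨?_, ?_, ?_, ?_⟩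
  · exact aux00 (m:ℝ) (n:ℝ) (φ r) (deriv (deriv φ) r) (ψ r) (deriv (deriv ψ) r)
      (ρ r) (deriv (deriv ρ) r) δ δ₁ hm2 hn2 hδ hδ₁ hA halb haub ha2'
      hbl hbub hb2p.le (by linarith) hcl hcub hc2p.le (by linarith)
  · exact aux11 (m:ℝ) (n:ℝ) (φ r) (deriv φ r) (deriv (deriv φ) r) (ψ r) (deriv ψ r)
      (ρ r) (deriv ρ r) δ δ₁ hm2 hn2 hδ hδ₁ hA halb haub ha2' ha1l' ha1u'
      hbl hbub hb1l hb1u hcl hcub hc1l hc1u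
  · exact aux22 (m:ℝ) (n:ℝ) (φ r) (deriv φ r) (ψ r) (deriv ψ r) (deriv (deriv ψ) r)
      (ρ r) (deriv ρ r) δ δ₁ hm2 hn2 hδ hδ₁ hC hD halb haub ha1l' ha1u'
      hbl hbub hb1l hb1u hb2p.le (by linarith) hcl hcub hc1l hc1u
  · exact aux33 (m:ℝ) (n:ℝ) (φ r) (deriv φ r) (ψ r) (deriv ψ r)
      (ρ r) (deriv ρ r) (deriv (deriv ρ) r) δ δ₁ hm2 hn2 hδ hδ₁ hC hD halb haub ha1l' ha1u'
      hbl hbub hb1l hb1u hcl hcub hc1l hc1u hc2p.le (by linarith)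
end
end

section
/- Let R₃ > e and c = (10 ln R₃)⁻¹, and let f(r) = -c(r ln r - (ln R₃ + 1)r) + b₃ where b₃ is chosen so that f(R₃) = b₁ with 0 < b₁ ≤ 100. Then f(R₃) = b₁, f'(R₃) = 0, r·f''(r) = -c for all r > 0, and if λ > 1 satisfies f(λR₃) = 0, then (λ ln λ - λ + 1)·R₃/(10 ln R₃) = b₁; moreover if R₃ ≥ 10⁵ then λ ≤ 10, and |f'(r)| ≤ (ln R₃)⁻¹ for all r ∈ [R₃, λR₃]. -/
/-!
Differentiating twice gives `f' r = -c (log r - log R₃)` and `f'' r = -c / r`. Comparing `f` at `R₃`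
and `λ R₃` gives `b₁ = c R₃ (λ log λ - λ + 1)`. If `λ > 10` the right side exceeds `11 c R₃`, which
for `R₃ ≥ 10⁵` beats `100 = 1000 c log R₃ ≥ b₁` since `log R₃ ≤ 2 √R₃`. On `[R₃, λ R₃]` finally
`|f'| ≤ c log λ ≤ c (λ - 1) ≤ 10 c = (log R₃)⁻¹`.
-/

open Real

noncomputable def logProfile (c L b : ℝ) (r : ℝ) : ℝ :=
  -c * (r * log r - (L + 1) * r) + b

section logProfile

variable {c L b r : ℝ}

theorem hasDerivAt_logProfile (hr : r ≠ 0) :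
    HasDerivAt (logProfile c L b) (-c * (log r - L)) r := by
  have h := (((hasDerivAt_mul_log hr).sub ((hasDerivAt_id r).const_mul (L + 1))).const_mul
    (-c)).add_const b
  exact h.congr_deriv (by ring)

theorem deriv_logProfile (hr : r ≠ 0) : deriv (logProfile c L b) r = -c * (log r - L) :=
  (hasDerivAt_logProfile hr).deriv

theorem deriv_deriv_logProfile (hr : r ≠ 0) : deriv (deriv (logProfile c L b)) r = -c / r := by
  have hderiv : deriv (logProfile c L b) =ᶠ[nhds r] fun x => -c * (log x - L) := by
    filter_upwards [isOpen_ne.mem_nhds hr] with x hx using deriv_logProfile hx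
  rw [hderiv.deriv_eq, (((hasDerivAt_log hr).sub_const L).const_mul (-c)).deriv]
  ring

theorem logProfile_mul_sub {R lam : ℝ} (hlam : lam ≠ 0) (hR : R ≠ 0) :
    logProfile c (log R) b (lam * R) - logProfile c (log R) b R
      = -c * R * (lam * log lam - lam + 1) := by
  simp only [logProfile, log_mul hlam hR]
  ring

end logProfile

theorem eleven_lt_mul_log_sub_add_one {lam : ℝ} (hlam : 10 < lam) :
    11 < lam * log lam - lam + 1 := by
  have hexp : exp 2 < 10 := by
    rw [show (2 : ℝ) = 1 + 1 by norm_num, exp_add]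
    nlinarith [exp_one_lt_d9, exp_pos 1]
  have hlog : 2 < log lam :=
    (lt_log_iff_exp_lt (by linarith)).2 (hexp.trans hlam)
  nlinarith

theorem thousand_mul_log_lt {R : ℝ} (hR : 10 ^ 5 ≤ R) : 1000 * log R < 11 * R := by
  have hsq : sqrt R * sqrt R = R := mul_self_sqrt (by linarith)
  have hsqrt : 300 ≤ sqrt R := by nlinarith [sqrt_nonneg R]
  have hlog : log R ≤ 2 * sqrt R := by
    have h := log_le_rpow_div (x := R) (by linarith) one_half_pos
    rwa [← sqrt_eq_rpow, div_eq_mul_inv, mul_comm, show (1 / 2 : ℝ)⁻¹ = 2 by norm_num] at h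
  nlinarith

theorem le_ten_of_mul_log_sub_add_one_mul_eq {R b lam : ℝ} (hR : 10 ^ 5 ≤ R) (hb : b ≤ 100)
    (h : (lam * log lam - lam + 1) * R = 10 * b * log R) : lam ≤ 10 := by
  by_contra! hlam
  have hlogR : 0 ≤ log R := log_nonneg (by linarith)
  have hbig := mul_lt_mul_of_pos_right (eleven_lt_mul_log_sub_add_one hlam)
    (by linarith : (0 : ℝ) < R)
  nlinarith [thousand_mul_log_lt hR]

theorem abs_mul_log_sub_log_le {c R r lam : ℝ} (hc : 0 ≤ c) (hR : 0 < R)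
    (hr : r ∈ Set.Icc R (lam * R)) : |-c * (log r - log R)| ≤ c * (lam - 1) := by
  obtain ⟨hRr, hrlam⟩ := hr
  have hlam : 0 < lam := pos_of_mul_pos_left (hR.trans_le (hRr.trans hrlam)) hR.le
  have hlower : log R ≤ log r := log_le_log hR hRr
  have hupper : log r - log R ≤ lam - 1 := by
    have := log_le_log (hR.trans_le hRr) hrlam
    rw [log_mul hlam.ne' hR.ne'] at this
    linarith [log_le_sub_one_of_pos hlam]
  rw [neg_mul, abs_neg, abs_of_nonneg (mul_nonneg hc (by linarith))]
  exact mul_le_mul_of_nonneg_left hupper hc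

/-- properties of `f(r) = -c(r ln r - (ln R₃ + 1)r) + b₃`. -/
theorem stmt5 (R₃ b₁ b₃ c : ℝ) (hR₃ : Real.exp 1 < R₃)
    (hc : c = (10 * Real.log R₃)⁻¹) (hb₁ : 0 < b₁ ∧ b₁ ≤ 100) (f : ℝ → ℝ)
    (hf : f = fun r => -c * (r * Real.log r - (Real.log R₃ + 1) * r) + b₃)
    (hfR₃ : f R₃ = b₁) :
    f R₃ = b₁ ∧ deriv f R₃ = 0 ∧
    (∀ r > (0:ℝ), r * deriv (deriv f) r = -c) ∧
    (∀ lam > (1:ℝ), f (lam * R₃) = 0 →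
      (lam * Real.log lam - lam + 1) * R₃ / (10 * Real.log R₃) = b₁ ∧
      (R₃ ≥ 10 ^ 5 → lam ≤ 10) ∧
      (R₃ ≥ 10 ^ 5 → ∀ r ∈ Set.Icc R₃ (lam * R₃), |deriv f r| ≤ (Real.log R₃)⁻¹)) := by
  have hR₃pos : 0 < R₃ := (exp_pos 1).trans hR₃
  have hlogR₃ : 1 < log R₃ := (lt_log_iff_exp_lt hR₃pos).2 hR₃
  have hcpos : 0 < c := hc ▸ by positivity
  replace hf : f = logProfile c (log R₃) b₃ := hf
  subst hf
  refine ⟨hfR₃, by simp [deriv_logProfile hR₃pos.ne'], fun r hr => ?_, fun lam hlam hflam => ?_⟩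
  · rw [deriv_deriv_logProfile hr.ne']
    field_simp
  have hgap := logProfile_mul_sub (c := c) (b := b₃) (by linarith : lam ≠ 0) hR₃pos.ne'
  rw [hflam, hfR₃] at hgap
  have hb₁eq : (lam * log lam - lam + 1) * R₃ = 10 * b₁ * log R₃ := by
    rw [hc] at hgap
    field_simp at hgap
    linarith
  have hlam10 : R₃ ≥ 10 ^ 5 → lam ≤ 10 := fun hR =>
    le_ten_of_mul_log_sub_add_one_mul_eq hR hb₁.2 hb₁eq
  refine ⟨by rw [hb₁eq]; field_simp, hlam10, fun hR r hr => ?_⟩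
  rw [deriv_logProfile (hR₃pos.trans_le hr.1).ne']
  calc |-c * (log r - log R₃)| ≤ c * (lam - 1) := abs_mul_log_sub_log_le hcpos.le hR₃pos hr
    _ ≤ c * 10 := by gcongr; linarith [hlam10 hR]
    _ = (log R₃)⁻¹ := by rw [hc]; field_simp
end

section
/- Let m, n ≥ 2 be integers and k ∈ (0,1) with k² ≤ min{(m-1), (n-1)}/(m+n+1). Let a₁ = k, a₂ = δ₁, b₁ = R₁(1-ε-k), b₂ = δ - R₁δ₁, where R₁ = 100, ε ∈ (0,1/100], 0 < δ₁ < δ, δ - R₁δ₁ > 0, and δ₁ ≤ δ₁₀ for some δ₁₀ > 0 depending on m, n, δ. Then all four Ricci curvatures of the metric dr² + (a₁r+b₁)²g_{S^m} + (a₂r+b₂)²g_{S^n} + (a₂r+b₂)²g_{S^2} are nonnegative for all r > 0; specifically: Ric₀₀ = 0; Ric₁₁ ≥ 0 since (m-1) - (m+n+1)a₁² ≥ 0 and (m-1)b₂ ≥ [(m-1)a₁b₂ + (n+2)a₂b₁]a₁ when δ₁ is small; Ric₂₂ ≥ 0 and Ric₃₃ ≥ 0 similarly. -/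
noncomputable section
open Set

/-! With affine warping functions all second derivatives vanish, and each Ricci curvature is a
quotient whose denominator is a product of warping functions and whose numerator is affine in `r`;
it is nonnegative for `r ≥ 0` as soon as both coefficients of the numerator are. Since `ψ = ρ`,
`Ric₂₂ = Ric₃₃ + (n - 2)/ψ²`, so only `Ric₁₁` and `Ric₃₃` need an argument. For `Ric₁₁` the
slope coefficient is nonnegative by the bound on `k²`, and the constant term because `δ₁ ≪ δ`;
for `Ric₃₃` both coefficients are nonnegative once `δ₁` is small compared with `1/(m + n)` and
with `b₁/(m δ)`. -/

lemma deriv_affine (a b : ℝ) : deriv (fun t : ℝ => a * t + b) = fun _ => a := by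
  funext x
  simp

lemma deriv_deriv_affine (a b : ℝ) : deriv (deriv fun t : ℝ => a * t + b) = fun _ => 0 := by
  simp only [deriv_affine, deriv_const']

lemma Ric22_eq_Ric33_add (m n : ℕ) (φ ψ : ℝ → ℝ) (r : ℝ) :
    Ric22 m n φ ψ ψ r = Ric33 m n φ ψ ψ r + ((n : ℝ) - 2) / ψ r ^ 2 := by
  simp only [Ric22, Ric33]
  ring

section Affine

variable (m n : ℕ) (a₁ b₁ a₂ b₂ r : ℝ)

lemma Ric00_affine (a₃ b₃ : ℝ) :
    Ric00 m n (fun t => a₁ * t + b₁) (fun t => a₂ * t + b₂) (fun t => a₃ * t + b₃) r = 0 := by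
  simp only [Ric00, deriv_deriv_affine]
  ring

lemma Ric11_affine (hφ : a₁ * r + b₁ ≠ 0) (hψ : a₂ * r + b₂ ≠ 0) :
    Ric11 m n (fun t => a₁ * t + b₁) (fun t => a₂ * t + b₂) (fun t => a₂ * t + b₂) r =
      (((m : ℝ) - 1) * (1 - a₁ ^ 2) * (a₂ * r + b₂) - (n + 2) * a₁ * a₂ * (a₁ * r + b₁)) /
      ((a₁ * r + b₁) ^ 2 * (a₂ * r + b₂)) := by
  simp only [Ric11, deriv_affine, deriv_const']
  generalize a₁ * r + b₁ = x at *
  generalize a₂ * r + b₂ = y at *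
  field_simp
  ring

lemma Ric33_affine (hφ : a₁ * r + b₁ ≠ 0) (hψ : a₂ * r + b₂ ≠ 0) :
    Ric33 m n (fun t => a₁ * t + b₁) (fun t => a₂ * t + b₂) (fun t => a₂ * t + b₂) r =
      ((1 - (n + 1) * a₂ ^ 2) * (a₁ * r + b₁) - m * a₁ * a₂ * (a₂ * r + b₂)) /
      ((a₁ * r + b₁) * (a₂ * r + b₂) ^ 2) := by
  simp only [Ric33, deriv_affine, deriv_const']
  generalize a₁ * r + b₁ = x at *
  generalize a₂ * r + b₂ = y at *
  field_simp
  ring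

variable {m n a₁ b₁ a₂ b₂ r}

lemma Ric11_affine_nonneg (hr : 0 ≤ r) (hφ : 0 < a₁ * r + b₁) (hψ : 0 < a₂ * r + b₂)
    (ha₂ : 0 ≤ a₂) (h₁ : (m + n + 1) * a₁ ^ 2 ≤ (m : ℝ) - 1)
    (h₀ : (n + 2) * a₁ * a₂ * b₁ ≤ ((m : ℝ) - 1) * (1 - a₁ ^ 2) * b₂) :
    0 ≤ Ric11 m n (fun t => a₁ * t + b₁) (fun t => a₂ * t + b₂) (fun t => a₂ * t + b₂) r := by
  rw [Ric11_affine m n a₁ b₁ a₂ b₂ r hφ.ne' hψ.ne']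
  refine div_nonneg ?_ (by positivity)
  nlinarith [mul_nonneg (mul_nonneg (sub_nonneg.2 h₁) ha₂) hr]

lemma Ric33_affine_nonneg (hr : 0 ≤ r) (hφ : 0 < a₁ * r + b₁) (hψ : 0 < a₂ * r + b₂)
    (ha₁ : 0 ≤ a₁) (h₁ : (m + n + 1) * a₂ ^ 2 ≤ 1)
    (h₀ : (n + 1) * a₂ ^ 2 * b₁ + m * a₁ * a₂ * b₂ ≤ b₁) :
    0 ≤ Ric33 m n (fun t => a₁ * t + b₁) (fun t => a₂ * t + b₂) (fun t => a₂ * t + b₂) r := by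
  rw [Ric33_affine m n a₁ b₁ a₂ b₂ r hφ.ne' hψ.ne']
  refine div_nonneg ?_ (by positivity)
  nlinarith [mul_nonneg (mul_nonneg (sub_nonneg.2 h₁) ha₁) hr]

lemma Ric33_affine_nonneg_of_slope_le (hr : 0 ≤ r) (ha₁ : 0 ≤ a₁) (ha₁' : a₁ ≤ 1) (hb₁ : 0 < b₁)
    (ha₂ : 0 ≤ a₂) (hb₂ : 0 < b₂) (hslope : a₂ * (2 * (m + n + 1)) ≤ 1)
    (hslope_b₂ : a₂ * (2 * m * b₂) ≤ b₁) :
    0 ≤ Ric33 m n (fun t => a₁ * t + b₁) (fun t => a₂ * t + b₂) (fun t => a₂ * t + b₂) r := by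
  have hsq : (m + n + 1) * a₂ ^ 2 ≤ 1 / 2 := by nlinarith
  have hn_part : (n + 1) * a₂ ^ 2 * b₁ ≤ b₁ / 2 := by
    have : (n + 1) * a₂ ^ 2 ≤ 1 / 2 := by nlinarith [sq_nonneg a₂]
    nlinarith
  have hm_part : m * a₁ * a₂ * b₂ ≤ b₁ / 2 := by
    nlinarith [mul_le_mul_of_nonneg_right ha₁' (by positivity : (0 : ℝ) ≤ m * a₂ * b₂)]
  exact Ric33_affine_nonneg hr (by positivity) (by positivity) ha₁ (by linarith) (by linarith)

end Affine

theorem stmt19_general (m n : ℕ) (hm : 2 ≤ m) (hn : 2 ≤ n) (k ε δ : ℝ)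
    (hk : 0 < k ∧ k < 1)
    (hk2 : k ^ 2 ≤ min ((m : ℝ) - 1) ((n : ℝ) - 1) / ((m : ℝ) + n + 1))
    (hkε : k < 1 - ε) (hδ : 0 < δ) :
    ∃ δ₁₀ > (0:ℝ), ∀ δ₁ : ℝ, 0 < δ₁ → δ₁ ≤ δ₁₀ → δ₁ < δ → 0 < δ - 100 * δ₁ →
      ∀ r > (0:ℝ),
        Ric00 m n (fun t => k * t + 100 * (1 - ε - k))
          (fun t => δ₁ * t + (δ - 100 * δ₁)) (fun t => δ₁ * t + (δ - 100 * δ₁)) r = 0 ∧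
        0 ≤ Ric11 m n (fun t => k * t + 100 * (1 - ε - k))
          (fun t => δ₁ * t + (δ - 100 * δ₁)) (fun t => δ₁ * t + (δ - 100 * δ₁)) r ∧
        0 ≤ Ric22 m n (fun t => k * t + 100 * (1 - ε - k))
          (fun t => δ₁ * t + (δ - 100 * δ₁)) (fun t => δ₁ * t + (δ - 100 * δ₁)) r ∧
        0 ≤ Ric33 m n (fun t => k * t + 100 * (1 - ε - k))
          (fun t => δ₁ * t + (δ - 100 * δ₁)) (fun t => δ₁ * t + (δ - 100 * δ₁)) r := by
  obtain ⟨hk0, hk1⟩ := hk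
  have hm' : (2 : ℝ) ≤ m := by exact_mod_cast hm
  have hn' : (2 : ℝ) ≤ n := by exact_mod_cast hn
  have hk2m : (m + n + 1) * k ^ 2 ≤ (m : ℝ) - 1 := by
    rw [le_div_iff₀ (by positivity)] at hk2
    linarith [min_le_left ((m : ℝ) - 1) ((n : ℝ) - 1)]
  set b₁ := 100 * (1 - ε - k)
  have hb₁ : 0 < b₁ := by linarith
  set M := ((m : ℝ) - 1) * (1 - k ^ 2)
  have hM : 0 < M := mul_pos (by linarith) (by nlinarith)
  have hD : 0 < (n + 2) * k * b₁ + 100 * M := by positivity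
  refine ⟨min (M * δ / ((n + 2) * k * b₁ + 100 * M)) (min (1 / (2 * (m + n + 1))) (b₁ / (2 * m * δ))),
    lt_min (by positivity) (lt_min (by positivity) (by positivity)), ?_⟩
  intro δ₁ hδ₁ hδ₁₀ _ hb₂ r hr
  obtain ⟨hA, hB, hC⟩ := by simpa only [le_min_iff] using hδ₁₀
  rw [le_div_iff₀ hD] at hA
  rw [le_div_iff₀ (by positivity)] at hB hC
  have hφ : 0 < k * r + b₁ := by positivity
  have hψ : 0 < δ₁ * r + (δ - 100 * δ₁) := by positivity
  have hm_slope : δ₁ * (2 * m * (δ - 100 * δ₁)) ≤ b₁ := by nlinarith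
  have h33 := Ric33_affine_nonneg_of_slope_le (m := m) (n := n) hr.le hk0.le hk1.le hb₁
    hδ₁.le hb₂ hB hm_slope
  refine ⟨Ric00_affine .., Ric11_affine_nonneg hr.le hφ hψ hδ₁.le hk2m (by linarith), ?_, h33⟩
  rw [Ric22_eq_Ric33_add]
  exact add_nonneg h33 (div_nonneg (by linarith) (sq_nonneg _))

/-- the affine triple warped product
`dr² + (kr+b₁)²g_{S^m} + (δ₁r+b₂)²g_{S^n} + (δ₁r+b₂)²g_{S^2}` with `b₁ = 100(1-ε-k)`,
`b₂ = δ - 100δ₁`, has nonnegative Ricci curvature (and `Ric₀₀ = 0`) for all `r > 0`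
provided `δ₁` is small enough depending on m, n, δ. -/
theorem stmt19 (m n : ℕ) (hm : 2 ≤ m) (hn : 2 ≤ n) (k ε δ : ℝ)
    (hk : 0 < k ∧ k < 1)
    (hk2 : k ^ 2 ≤ min ((m : ℝ) - 1) ((n : ℝ) - 1) / ((m : ℝ) + n + 1))
    (hε : 0 < ε ∧ ε ≤ 1 / 100) (hkε : k < 1 - ε) (hδ : 0 < δ) :
    ∃ δ₁₀ > (0:ℝ), ∀ δ₁ : ℝ, 0 < δ₁ → δ₁ ≤ δ₁₀ → δ₁ < δ → 0 < δ - 100 * δ₁ →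
      ∀ r > (0:ℝ),
        Ric00 m n (fun t => k * t + 100 * (1 - ε - k))
          (fun t => δ₁ * t + (δ - 100 * δ₁)) (fun t => δ₁ * t + (δ - 100 * δ₁)) r = 0 ∧
        0 ≤ Ric11 m n (fun t => k * t + 100 * (1 - ε - k))
          (fun t => δ₁ * t + (δ - 100 * δ₁)) (fun t => δ₁ * t + (δ - 100 * δ₁)) r ∧
        0 ≤ Ric22 m n (fun t => k * t + 100 * (1 - ε - k))
          (fun t => δ₁ * t + (δ - 100 * δ₁)) (fun t => δ₁ * t + (δ - 100 * δ₁)) r ∧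
        0 ≤ Ric33 m n (fun t => k * t + 100 * (1 - ε - k))
          (fun t => δ₁ * t + (δ - 100 * δ₁)) (fun t => δ₁ * t + (δ - 100 * δ₁)) r :=
  stmt19_general m n hm hn k ε δ hk hk2 hkε hδ
end
end
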